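/- Let A ⊆ ℝ^d be a nonempty compact set with circumradius R (radius of a smallest enclosing ball of A). Then for every n ≥ 1, the Hausdorff distance between (1/n)·A_n (where A_n is the n-fold Minkowski sum of A with itself) and the convex hull of A is at most C·R/n for a constant C depending only on d. -/

import Mathlib

open Pointwise

/-- n-fold Minkowski sum of a set with itself (with `msum A 1 = A`). -/
def msum {E : Type*} [AddCommMonoid E] (A : Set E) : ℕ → Set E
  | 0 => {0}
  | 1 => A
  | (n+1) => msum A n + A

section helpers

variable {E : Type*} [AddCommMonoid E] {A : Set E}

lemma msum_one : msum A 1 = A := rfl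

lemma msum_succ {n : ℕ} (hn : 1 ≤ n) : msum A (n + 1) = msum A n + A := by
  cases n with
  | zero => omega
  | succ m => rfl

lemma mem_msum_add {n : ℕ} (hn : 1 ≤ n) {x a : E} (hx : x ∈ msum A n) (ha : a ∈ A) :
    x + a ∈ msum A (n + 1) := by
  rw [msum_succ hn]
  exact Set.add_mem_add hx ha

lemma nsmul_mem_msum {a : E} (ha : a ∈ A) : ∀ n : ℕ, 1 ≤ n → n • a ∈ msum A n := by
  intro n hn
  induction n with
  | zero => omega
  | succ m ih =>
    rcases Nat.eq_or_lt_of_le hn with h | h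
    · simpa [← h, msum_one] using ha
    · have hm : 1 ≤ m := by omega
      have := mem_msum_add hm (ih hm) ha
      simpa [succ_nsmul] using this

lemma msum_add_mem {m : ℕ} (hm : 1 ≤ m) {x : E} (hx : x ∈ msum A m) :
    ∀ k : ℕ, 1 ≤ k → ∀ y ∈ msum A k, x + y ∈ msum A (m + k) := by
  intro k
  induction k with
  | zero => omega
  | succ j ih =>
    intro _ y hy
    rcases Nat.eq_zero_or_pos j with rfl | hj
    · exact mem_msum_add hm hx (by simpa [msum_one] using hy)
    · rw [msum_succ hj] at hy
      obtain ⟨u, hu, a, ha, rfl⟩ := hy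
      have h2 := mem_msum_add (by omega : 1 ≤ m + j) (ih hj u hu) ha
      have he : m + (j + 1) = m + j + 1 := by omega
      rw [he]
      simpa [add_assoc] using h2

lemma sum_nsmul_mem_msum {t : Finset E} (hts : ↑t ⊆ A) (k : E → ℕ) {n : ℕ} (hn : 1 ≤ n)
    (hsum : ∑ e ∈ t, k e = n) : (∑ e ∈ t, k e • e) ∈ msum A n := by
  classical
  induction t using Finset.induction_on generalizing n with
  | empty => simp at hsum; omega
  | @insert a s hnotmem ih =>
    have ha : a ∈ A := hts (by simp)
    have hs : ↑s ⊆ A := fun x hx => hts (by simp [hx])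
    rw [Finset.sum_insert hnotmem] at hsum ⊢
    rcases Nat.eq_zero_or_pos (k a) with hka | hka
    · rw [hka, zero_smul, zero_add]
      exact ih hs (by omega) (by omega)
    · rcases Nat.eq_zero_or_pos (∑ e ∈ s, k e) with hks | hks
      · have hz : (∑ e ∈ s, k e • e) = 0 := by
          apply Finset.sum_eq_zero
          intro x hx
          have hx0 : k x = 0 := by
            have := Finset.sum_eq_zero_iff.mp hks x hx
            exact this
          simp [hx0]
        rw [hz, add_zero]
        have hkan : k a = n := by omega
        rw [hkan] at hka ⊢
        exact nsmul_mem_msum ha _ hka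
      · subst hsum
        exact msum_add_mem hka (nsmul_mem_msum ha _ hka) _ hks _ (ih hs hks rfl)

end helpers

section convexside

variable {E : Type*} [NormedAddCommGroup E] [NormedSpace ℝ E] {A : Set E}

lemma msum_subset_smul_convexHull : ∀ n : ℕ, 1 ≤ n →
    msum A n ⊆ (n : ℝ) • (convexHull ℝ A) := by
  intro n hn
  induction n with
  | zero => omega
  | succ m ih =>
    rcases Nat.eq_zero_or_pos m with rfl | hm
    · simpa [msum_one] using subset_convexHull ℝ A
    · rw [msum_succ hm]
      intro x hx
      obtain ⟨u, hu, a, ha, rfl⟩ := hx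
      have h1 : u ∈ (m : ℝ) • (convexHull ℝ A) := ih hm hu
      have h2 : a ∈ (1 : ℝ) • (convexHull ℝ A) := by
        simpa using subset_convexHull ℝ A ha
      have := (convex_convexHull ℝ A).add_smul (by positivity : (0:ℝ) ≤ (m:ℝ))
        (by norm_num : (0:ℝ) ≤ 1)
      rw [Nat.cast_succ, this]
      exact Set.add_mem_add h1 h2

end convexside

set_option maxHeartbeats 2000000 in
theorem stmt3 (d : ℕ) :
    ∃ C : ℝ, 0 < C ∧
      ∀ (A : Set (EuclideanSpace ℝ (Fin d))), IsCompact A → A.Nonempty →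
        ∀ (c : EuclideanSpace ℝ (Fin d)) (R : ℝ), A ⊆ Metric.closedBall c R →
          ∀ n : ℕ, 1 ≤ n →
            Metric.hausdorffDist (((n : ℝ)⁻¹) • msum A n) (convexHull ℝ A)
              ≤ C * R / n := by
  classical
  refine ⟨2 * d + 2, by positivity, ?_⟩
  intro A hAcomp hAne c R hAR n hn
  obtain ⟨a₀, ha₀⟩ := hAne
  have hR : 0 ≤ R := le_trans dist_nonneg (hAR ha₀)
  have hnR : (0:ℝ) < n := by exact_mod_cast hn
  have hr0 : (0:ℝ) ≤ (2 * d + 2) * R / n := by positivity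
  apply Metric.hausdorffDist_le_of_mem_dist hr0
  · -- each point of the scaled Minkowski sum is in the convex hull
    intro x hx
    refine ⟨x, ?_, by simp [hr0]⟩
    obtain ⟨z, hz, rfl⟩ := hx
    obtain ⟨y, hy, rfl⟩ := msum_subset_smul_convexHull n hn hz
    show ((n : ℝ)⁻¹ • ((n : ℝ) • y)) ∈ convexHull ℝ A
    rw [smul_smul, inv_mul_cancel₀ (ne_of_gt hnR), one_smul]
    exact hy
  · -- each point of the convex hull is close to the scaled Minkowski sum
    intro y hy
    rw [convexHull_eq_union] at hy
    simp only [Set.mem_iUnion] at hy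
    obtain ⟨t, hts, hai, hyt⟩ := hy
    have hcard : t.card ≤ d + 1 := by
      have h1 := hai.card_le_finrank_succ
      have h2 : Module.finrank ℝ
          (vectorSpan ℝ (Set.range ((↑) : t → EuclideanSpace ℝ (Fin d)))) ≤ d := by
        have h3 := Submodule.finrank_le
          (vectorSpan ℝ (Set.range ((↑) : t → EuclideanSpace ℝ (Fin d))))
        simpa [finrank_euclideanSpace_fin] using h3
      calc t.card = Fintype.card t := (Fintype.card_coe t).symm
        _ ≤ _ + 1 := h1
        _ ≤ d + 1 := by omega
    rw [Finset.convexHull_eq] at hyt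
    obtain ⟨w, hw0, hw1, hyc⟩ := hyt
    have hyc' : ∑ e ∈ t, w e • e = y := by
      rw [← hyc, Finset.centerMass_eq_of_sum_1 _ id hw1]
      rfl
    have htne : t.Nonempty := by
      rcases Finset.eq_empty_or_nonempty t with rfl | h
      · simp at hw1
      · exact h
    obtain ⟨e₀, he₀⟩ := htne
    set S : ℕ := ∑ e ∈ t.erase e₀, ⌊(n : ℝ) * w e⌋₊ with hS
    have hfle : ∀ e ∈ t, (⌊(n : ℝ) * w e⌋₊ : ℝ) ≤ (n : ℝ) * w e := fun e he =>
      Nat.floor_le (mul_nonneg hnR.le (hw0 e he))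
    have hSn : S ≤ n := by
      have hSr : (S : ℝ) ≤ (n : ℝ) := by
        calc (S : ℝ) = ∑ e ∈ t.erase e₀, (⌊(n : ℝ) * w e⌋₊ : ℝ) := by
              rw [hS]; push_cast; ring
          _ ≤ ∑ e ∈ t.erase e₀, (n : ℝ) * w e :=
              Finset.sum_le_sum (fun e he => hfle e (Finset.mem_of_mem_erase he))
          _ ≤ ∑ e ∈ t, (n : ℝ) * w e :=
              Finset.sum_le_sum_of_subset_of_nonneg (Finset.erase_subset _ _)
                (fun e he _ => mul_nonneg hnR.le (hw0 e he))
          _ = (n : ℝ) := by rw [← Finset.mul_sum, hw1, mul_one]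
      exact_mod_cast hSr
    set k : EuclideanSpace ℝ (Fin d) → ℕ :=
      fun e => if e = e₀ then n - S else ⌊(n : ℝ) * w e⌋₊ with hk
    have hkerase : ∀ e ∈ t.erase e₀, k e = ⌊(n : ℝ) * w e⌋₊ := by
      intro e he
      simp [hk, Finset.ne_of_mem_erase he]
    have hksum : ∑ e ∈ t, k e = n := by
      rw [← Finset.add_sum_erase _ _ he₀, Finset.sum_congr rfl hkerase, ← hS]
      have : k e₀ = n - S := by simp [hk]
      omega
    refine ⟨(n : ℝ)⁻¹ • ∑ e ∈ t, k e • e,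
      Set.smul_mem_smul_set (sum_nsmul_mem_msum hts k hn hksum), ?_⟩
    set z := (n : ℝ)⁻¹ • ∑ e ∈ t, (k e : ℕ) • e with hz
    have hz' : z = ∑ e ∈ t, ((k e : ℝ) / n) • e := by
      rw [hz, Finset.smul_sum]
      refine Finset.sum_congr rfl (fun e he => ?_)
      rw [← Nat.cast_smul_eq_nsmul ℝ, smul_smul, div_eq_inv_mul]
    set δ : EuclideanSpace ℝ (Fin d) → ℝ := fun e => w e - (k e : ℝ) / n with hδ
    have hδsum : ∑ e ∈ t, δ e = 0 := by
      have hcast : ∑ e ∈ t, (k e : ℝ) = (n : ℝ) := by exact_mod_cast congrArg Nat.cast hksum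
      simp only [hδ, Finset.sum_sub_distrib]
      rw [hw1, ← Finset.sum_div, hcast, div_self (ne_of_gt hnR)]
      ring
    have hdiff : y - z = ∑ e ∈ t, δ e • (e - c) := by
      have : ∑ e ∈ t, δ e • (e - c) = (∑ e ∈ t, δ e • e) - (∑ e ∈ t, δ e) • c := by
        simp only [smul_sub, Finset.sum_sub_distrib, Finset.sum_smul]
      rw [this, hδsum, zero_smul, sub_zero, hz', ← hyc']
      simp only [hδ, sub_smul, Finset.sum_sub_distrib]
    -- bound on sum of |δ|
    have hδerase : ∀ e ∈ t.erase e₀, |δ e| ≤ 1 / n := by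
      intro e he
      have het : e ∈ t := Finset.mem_of_mem_erase he
      have h1 : (⌊(n : ℝ) * w e⌋₊ : ℝ) ≤ (n : ℝ) * w e := hfle e het
      have h2 : (n : ℝ) * w e - 1 < (⌊(n : ℝ) * w e⌋₊ : ℝ) := Nat.sub_one_lt_floor _
      have hke : (k e : ℝ) = (⌊(n : ℝ) * w e⌋₊ : ℝ) := by rw [hkerase e he]
      have hδe : δ e = w e - (k e : ℝ) / n := rfl
      rw [abs_le, hδe]
      have h1n : (0:ℝ) ≤ 1 / (n : ℝ) := by positivity
      constructor
      · have hle : (k e : ℝ) / n ≤ w e := (div_le_iff₀ hnR).mpr (by nlinarith)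
        linarith
      · have hc : (1 / (n : ℝ)) * (n : ℝ) = 1 := by field_simp
        have hge : w e - 1 / (n : ℝ) ≤ (k e : ℝ) / n :=
          (le_div_iff₀ hnR).mpr (by nlinarith)
        linarith
    have hδ₀ : |δ e₀| ≤ d / n := by
      have h1 : δ e₀ = -∑ e ∈ t.erase e₀, δ e := by
        have := Finset.add_sum_erase _ δ he₀
        rw [hδsum] at this
        linarith
      rw [h1, abs_neg]
      calc |∑ e ∈ t.erase e₀, δ e| ≤ ∑ e ∈ t.erase e₀, |δ e| :=
            Finset.abs_sum_le_sum_abs _ _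
        _ ≤ ∑ _e ∈ t.erase e₀, (1 / (n : ℝ)) := Finset.sum_le_sum hδerase
        _ = (t.erase e₀).card * (1 / (n : ℝ)) := by rw [Finset.sum_const, nsmul_eq_mul]
        _ ≤ d * (1 / (n : ℝ)) := by
            have hc : (t.erase e₀).card ≤ d := by
              have := Finset.card_erase_of_mem he₀
              omega
            have : ((t.erase e₀).card : ℝ) ≤ (d : ℝ) := by exact_mod_cast hc
            have h1n : 0 ≤ 1 / (n : ℝ) := by positivity
            nlinarith
        _ = d / n := by ring
    have hsumabs : ∑ e ∈ t, |δ e| ≤ 2 * d / n := by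
      rw [← Finset.add_sum_erase _ _ he₀]
      have h2 : ∑ e ∈ t.erase e₀, |δ e| ≤ d / n := by
        calc ∑ e ∈ t.erase e₀, |δ e| ≤ ∑ _e ∈ t.erase e₀, (1 / (n : ℝ)) :=
              Finset.sum_le_sum hδerase
          _ = (t.erase e₀).card * (1 / (n : ℝ)) := by rw [Finset.sum_const, nsmul_eq_mul]
          _ ≤ d * (1 / (n : ℝ)) := by
              have hc : (t.erase e₀).card ≤ d := by
                have := Finset.card_erase_of_mem he₀
                omega
              have : ((t.erase e₀).card : ℝ) ≤ (d : ℝ) := by exact_mod_cast hc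
              have h1n : 0 ≤ 1 / (n : ℝ) := by positivity
              nlinarith
          _ = d / n := by ring
      have h3 : 2 * (d:ℝ) / n = (d:ℝ)/n + (d:ℝ)/n := by ring
      linarith [hδ₀]
    -- final distance bound
    have hnorm : dist y z ≤ 2 * d * R / n := by
      rw [dist_eq_norm, hdiff]
      calc ‖∑ e ∈ t, δ e • (e - c)‖ ≤ ∑ e ∈ t, ‖δ e • (e - c)‖ := norm_sum_le _ _
        _ ≤ ∑ e ∈ t, |δ e| * R := by
            refine Finset.sum_le_sum (fun e he => ?_)
            rw [norm_smul, Real.norm_eq_abs]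
            have hec : ‖e - c‖ ≤ R := by
              have := hAR (hts he)
              rwa [Metric.mem_closedBall, dist_eq_norm] at this
            exact mul_le_mul_of_nonneg_left hec (abs_nonneg _)
        _ = (∑ e ∈ t, |δ e|) * R := by rw [Finset.sum_mul]
        _ ≤ (2 * d / n) * R := mul_le_mul_of_nonneg_right hsumabs hR
        _ = 2 * d * R / n := by ring
    refine hnorm.trans ?_
    rw [div_le_div_iff₀ hnR hnR]
    nlinarith
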